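/- For all δ, γ ∈ (0,1) there exists N ∈ ℕ such that for every closed interval [a,b] ⊆ (0,1] with b − a > δ and every integer n ≥ N, one has [γ, 1] ⊆ F_{1/2,3,1}^n([a,b]). -/
import Mathlib


open Set Filter Topology

/-- One-sided Mahavier product of a relation `F` on `X`. -/
def MahavierPlus {X : Type*} (F : Set (X × X)) : Set (ℕ → X) :=
  {x | ∀ n : ℕ, (x n, x (n + 1)) ∈ F}

/-- Two-sided Mahavier product of a relation `F` on `X`. -/
def MahavierTwo {X : Type*} (F : Set (X × X)) : Set (ℤ → X) :=
  {x | ∀ n : ℤ, (x n, x (n + 1)) ∈ F}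

/-- The shift map on the one-sided Mahavier product. -/
def shiftPlus {X : Type*} (F : Set (X × X)) (x : MahavierPlus F) : MahavierPlus F :=
  ⟨fun n => (x : ℕ → X) (n + 1), fun n => x.2 (n + 1)⟩

/-- The shift map on the two-sided Mahavier product. -/
def shiftTwo {X : Type*} (F : Set (X × X)) (x : MahavierTwo F) : MahavierTwo F :=
  ⟨fun n => (x : ℤ → X) (n + 1), fun n => x.2 (n + 1)⟩

/-- The metric `D(x,y) = sup_{n ≥ 1} d(x_n, y_n)/2^n` on one-sided sequences
(coordinates are indexed from `0` here, so the weight is `2^(n+1)`). -/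
noncomputable def DPlus {X : Type*} [PseudoMetricSpace X] (x y : ℕ → X) : ℝ :=
  ⨆ n : ℕ, dist (x n) (y n) / 2 ^ (n + 1)

/-- The metric `D(x,y) = sup_{n ∈ ℤ} d(x_n, y_n)/2^{|n|}` on two-sided sequences. -/
noncomputable def DTwo {X : Type*} [PseudoMetricSpace X] (x y : ℤ → X) : ℝ :=
  ⨆ n : ℤ, dist (x n) (y n) / 2 ^ n.natAbs

/-- Topological transitivity. -/
def TopTransitive {Y : Type*} [TopologicalSpace Y] (f : Y → Y) : Prop :=
  ∀ U V : Set Y, IsOpen U → IsOpen V → U.Nonempty → V.Nonempty →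
    ∃ n : ℕ, (f^[n] '' U ∩ V).Nonempty

/-- Topological mixing. -/
def TopMixing {Y : Type*} [TopologicalSpace Y] (f : Y → Y) : Prop :=
  ∀ U V : Set Y, IsOpen U → IsOpen V → U.Nonempty → V.Nonempty →
    ∃ n₀ : ℕ, ∀ n : ℕ, n₀ ≤ n → (f^[n] '' U ∩ V).Nonempty

/-- The shadowing property for a map `f` with respect to a distance `dY`. -/
def ShadowingProp {Y : Type*} (dY : Y → Y → ℝ) (f : Y → Y) : Prop :=
  ∀ ε : ℝ, 0 < ε → ∃ δ : ℝ, 0 < δ ∧ ∀ x : ℕ → Y,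
    (∀ k : ℕ, dY (f (x k)) (x (k + 1)) < δ) →
    ∃ y : Y, ∀ k : ℕ, dY (f^[k] y) (x k) < ε

/-- The specification property for a map `f` with respect to a distance `dY`. -/
def SpecProp {Y : Type*} (dY : Y → Y → ℝ) (f : Y → Y) : Prop :=
  ∀ ε : ℝ, 0 < ε → ∃ N : ℕ, 0 < N ∧ ∀ n : ℕ, 0 < n →
    ∀ x : Fin n → Y, ∀ k l : Fin n → ℕ,
      (∀ i, k i ≤ l i) →
      (∀ i j : Fin n, (i : ℕ) + 1 = (j : ℕ) → l i + N ≤ k j) →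
      ∃ y : Y, ∀ i : Fin n, ∀ m : ℕ, k i ≤ m → m ≤ l i →
        dY (f^[m] y) (f^[m] (x i)) ≤ ε

/-- The CR-specification property for the one-sided Mahavier product of `F`. -/
def CRSpec {X : Type*} [PseudoMetricSpace X] (F : Set (X × X)) : Prop :=
  ∀ ε : ℝ, 0 < ε → ∃ N : ℕ, 0 < N ∧ ∀ n : ℕ, 0 < n →
    ∀ x : Fin n → MahavierPlus F, ∀ k l : Fin n → ℕ,
      (∀ i, k i ≤ l i) →
      (∀ i j : Fin n, (i : ℕ) + 1 = (j : ℕ) → l i + N ≤ k j) →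
      ∃ y : MahavierPlus F, ∀ i : Fin n, ∀ m : ℕ, k i ≤ m → m ≤ l i →
        dist ((x i : ℕ → X) m) ((y : ℕ → X) m) ≤ ε

/-- The image of a set under a relation. -/
def relImage {X : Type*} (F : Set (X × X)) (A : Set X) : Set X :=
  {y | ∃ a ∈ A, (a, y) ∈ F}

/-- Composition of relations. -/
def relComp {X : Type*} (F G : Set (X × X)) : Set (X × X) :=
  {p | ∃ z : X, (p.1, z) ∈ F ∧ (z, p.2) ∈ G}

/-- Iterated composition `F^n` of a relation with itself. -/
def relPow {X : Type*} (F : Set (X × X)) : ℕ → Set (X × X)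
  | 0 => {p | p.1 = p.2}
  | n + 1 => relComp (relPow F n) F

/-- The relation `F_{1/2,3,1} = {(x,3x) : 0 ≤ x ≤ 1/3} ∪ {(x,x/2) : 0 ≤ x ≤ 1} ∪ {(x,x) : 0 ≤ x ≤ 1}`
on `I = [0,1]`. -/
def F231 : Set (ℝ × ℝ) :=
  {p | (p.1 ∈ Set.Icc (0 : ℝ) (1 / 3) ∧ p.2 = 3 * p.1) ∨
       (p.1 ∈ Set.Icc (0 : ℝ) 1 ∧ p.2 = p.1 / 2) ∨
       (p.1 ∈ Set.Icc (0 : ℝ) 1 ∧ p.2 = p.1)}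

lemma two_pow_ne_three_pow (e d : ℕ) (hd : 0 < d) : (2:ℕ)^e ≠ 3^d := by
  intro h
  rcases Nat.eq_zero_or_pos e with he | he
  · rw [he, pow_zero] at h
    have : 1 < (3:ℕ)^d := Nat.one_lt_pow hd.ne' (by norm_num)
    omega
  · have h2 : Even ((2:ℕ)^e) := (Nat.even_pow).mpr ⟨even_two, he.ne'⟩
    have h3 : Odd ((3:ℕ)^d) := Odd.pow (by decide)
    rw [h] at h2
    exact (Nat.not_even_iff_odd.mpr h3) h2

lemma log_comb_ne (e d : ℕ) (hd : 0 < d) :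
    (e:ℝ) * Real.log 2 - (d:ℝ) * Real.log 3 ≠ 0 := by
  intro h
  have h' : Real.log ((2:ℝ)^e) = Real.log ((3:ℝ)^d) := by
    rw [Real.log_pow, Real.log_pow]
    push_cast
    linarith
  have h2 : ((2:ℝ))^e = 3^d := by
    have := congrArg Real.exp h'
    rwa [Real.exp_log (by positivity), Real.exp_log (by positivity)] at this
  have : ((2^e : ℕ) : ℝ) = ((3^d : ℕ) : ℝ) := by push_cast; exact h2
  exact two_pow_ne_three_pow e d hd (Nat.cast_injective this)

lemma exists_eta (ε : ℝ) (hε : 0 < ε) :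
    ∃ d e : ℕ, 0 < d ∧ (e:ℝ) * Real.log 2 - (d:ℝ) * Real.log 3 ≠ 0 ∧
      |(e:ℝ) * Real.log 2 - (d:ℝ) * Real.log 3| ≤ ε := by
  have l2pos : 0 < Real.log 2 := Real.log_pos (by norm_num)
  have l3pos : 0 < Real.log 3 := Real.log_pos (by norm_num)
  have hβ : (1:ℝ) < Real.log 3 / Real.log 2 := by
    rw [lt_div_iff₀ l2pos, one_mul]
    exact Real.log_lt_log (by norm_num) (by norm_num)
  set n : ℕ := ⌈Real.log 2 / ε⌉₊ + 1 with hn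
  obtain ⟨j, k, hk0, hkn, h⟩ :=
    Real.exists_int_int_abs_mul_sub_le (Real.log 3 / Real.log 2) (n := n) (by omega)
  have hkR : (1:ℝ) ≤ (k:ℝ) := by exact_mod_cast hk0
  have hfrac : (1:ℝ) / (n + 1) ≤ 1/2 := by
    apply one_div_le_one_div_of_le (by norm_num)
    have : (1:ℕ) ≤ n := by omega
    push_cast
    have : (1:ℝ) ≤ (n:ℝ) := by exact_mod_cast this
    linarith
  have hj0 : 0 < j := by
    have habs : |(k:ℝ) * (Real.log 3 / Real.log 2) - j| ≤ 1/2 := h.trans hfrac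
    have h1 : (k:ℝ) * (Real.log 3 / Real.log 2) - j ≤ 1/2 := (abs_le.mp habs).2
    have h2 : (1:ℝ) < (k:ℝ) * (Real.log 3 / Real.log 2) :=
      lt_of_lt_of_le hβ (le_mul_of_one_le_left (by positivity) hkR)
    have : (0:ℝ) < (j:ℝ) := by linarith
    exact_mod_cast this
  refine ⟨k.toNat, j.toNat, ?_, ?_, ?_⟩
  · omega
  · have := log_comb_ne j.toNat k.toNat (by omega)
    exact this
  · have hkc : ((k.toNat:ℕ):ℝ) = (k:ℝ) := by exact_mod_cast Int.toNat_of_nonneg hk0.le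
    have hjc : ((j.toNat:ℕ):ℝ) = (j:ℝ) := by exact_mod_cast Int.toNat_of_nonneg hj0.le
    rw [hjc, hkc]
    have key : (j:ℝ) * Real.log 2 - (k:ℝ) * Real.log 3
        = -(((k:ℝ) * (Real.log 3 / Real.log 2) - j) * Real.log 2) := by
      field_simp
      ring
    rw [key, abs_neg, abs_mul, abs_of_pos l2pos]
    have hb : |(k:ℝ) * (Real.log 3 / Real.log 2) - (j:ℝ)| * Real.log 2
        ≤ (1 / (n + 1)) * Real.log 2 := by
      exact mul_le_mul_of_nonneg_right h l2pos.le
    refine hb.trans ?_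
    rw [div_mul_eq_mul_div, one_mul, div_le_iff₀ (by positivity)]
    have hceil : Real.log 2 / ε ≤ (⌈Real.log 2 / ε⌉₊ : ℝ) := Nat.le_ceil _
    have hceil2 : ((⌈Real.log 2 / ε⌉₊ : ℕ) : ℝ) ≤ (n:ℝ) := by
      have : ⌈Real.log 2 / ε⌉₊ ≤ n := by omega
      exact_mod_cast this
    have hd2 : Real.log 2 / ε ≤ (n:ℝ) + 1 := by linarith
    have h1 : Real.log 2 ≤ ((n:ℝ) + 1) * ε := (div_le_iff₀ hε).mp hd2
    linarith

lemma step_lemma (s L ε c : ℝ) (hs : 0 < s) (hsε : s ≤ ε) (hcL : c ≤ L) :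
    ∃ m : ℕ, (m:ℝ) ≤ (L - c)/s + 1 ∧ L ≤ c + m*s ∧ c + m*s ≤ L + ε := by
  have hnn : 0 ≤ (L - c)/s := div_nonneg (by linarith) hs.le
  refine ⟨⌈(L - c)/s⌉₊, ?_, ?_, ?_⟩
  · exact (Nat.ceil_lt_add_one hnn).le
  · have h1 : (L - c)/s ≤ (⌈(L - c)/s⌉₊ : ℝ) := Nat.le_ceil _
    have := (div_le_iff₀ hs).mp h1
    linarith
  · have h2 : ((⌈(L - c)/s⌉₊ : ℕ) : ℝ) < (L - c)/s + 1 := Nat.ceil_lt_add_one hnn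
    have h3 : ((⌈(L - c)/s⌉₊ : ℕ) : ℝ) * s < ((L - c)/s + 1) * s :=
      mul_lt_mul_of_pos_right h2 hs
    have h4 : ((L - c)/s) * s = L - c := by field_simp
    nlinarith

lemma window_lemma (ε A B : ℝ) (hε : 0 < ε) :
    ∃ N : ℕ, ∀ L : ℝ, A ≤ L → L ≤ B →
      ∃ k j : ℕ, k + j ≤ N ∧ L ≤ (k:ℝ) * Real.log 2 - (j:ℝ) * Real.log 3 ∧
        (k:ℝ) * Real.log 2 - (j:ℝ) * Real.log 3 ≤ L + ε := by
  have l2pos : 0 < Real.log 2 := Real.log_pos (by norm_num)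
  have l3pos : 0 < Real.log 3 := Real.log_pos (by norm_num)
  obtain ⟨d, e, hd, hne, habs⟩ := exists_eta ε hε
  set η := (e:ℝ) * Real.log 2 - (d:ℝ) * Real.log 3 with hη
  rcases hne.lt_or_gt with hneg | hpos
  · -- η < 0 : start high at K·log2 and step down by -η
    set s := -η with hs
    have hs0 : 0 < s := by simp only [hs]; linarith
    have hsε : s ≤ ε := by
      have := abs_le.mp habs
      simp only [hs]; linarith [this.1]
    set K : ℕ := ⌈(B + ε)/Real.log 2⌉₊ with hK
    have hKc : B + ε ≤ (K:ℝ) * Real.log 2 := by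
      have h1 : (B + ε)/Real.log 2 ≤ (K:ℝ) := Nat.le_ceil _
      have := (div_le_iff₀ l2pos).mp h1
      linarith
    set c := -((K:ℝ) * Real.log 2) with hc
    set mB : ℕ := ⌈((-A - ε) - c)/s + 1⌉₊ with hmB
    refine ⟨K + mB*(e+d), ?_⟩
    intro L hAL hLB
    obtain ⟨m, hm1, hm2, hm3⟩ := step_lemma s (-L - ε) ε c hs0 hsε (by simp only [hc]; linarith)
    have hmmB : m ≤ mB := by
      have hub : (m:ℝ) ≤ ((-A - ε) - c)/s + 1 := by
        refine hm1.trans ?_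
        have hdd : ((-L - ε) - c)/s ≤ ((-A - ε) - c)/s := by gcongr <;> linarith
        linarith
      have : (m:ℝ) ≤ (mB:ℝ) := hub.trans (Nat.le_ceil _)
      exact_mod_cast this
    refine ⟨K + m*e, m*d, ?_, ?_, ?_⟩
    · have : m*e + m*d ≤ mB*e + mB*d := by
        exact Nat.add_le_add (Nat.mul_le_mul_right e hmmB) (Nat.mul_le_mul_right d hmmB)
      calc K + m*e + m*d ≤ K + (mB*e + mB*d) := by omega
      _ = K + mB*(e+d) := by ring
    · have hval : ((K + m*e : ℕ):ℝ) * Real.log 2 - ((m*d : ℕ):ℝ) * Real.log 3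
          = -(c + (m:ℝ)*s) := by
        push_cast
        simp only [hc, hs, hη]
        ring
      rw [hval]; linarith
    · have hval : ((K + m*e : ℕ):ℝ) * Real.log 2 - ((m*d : ℕ):ℝ) * Real.log 3
          = -(c + (m:ℝ)*s) := by
        push_cast
        simp only [hc, hs, hη]
        ring
      rw [hval]; linarith
  · -- η > 0 : start low at -J·log3 and step up by η
    set s := η with hs
    have hs0 : 0 < s := hpos
    have hsε : s ≤ ε := by
      have := abs_le.mp habs
      simp only [hs]; linarith [this.2]
    set J : ℕ := ⌈(-A)/Real.log 3⌉₊ with hJ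
    have hJc : -A ≤ (J:ℝ) * Real.log 3 := by
      have h1 : (-A)/Real.log 3 ≤ (J:ℝ) := Nat.le_ceil _
      have := (div_le_iff₀ l3pos).mp h1
      linarith
    set c := -((J:ℝ) * Real.log 3) with hc
    set mB : ℕ := ⌈(B - c)/s + 1⌉₊ with hmB
    refine ⟨mB*e + (J + mB*d), ?_⟩
    intro L hAL hLB
    obtain ⟨m, hm1, hm2, hm3⟩ := step_lemma s L ε c hs0 hsε (by simp only [hc]; linarith)
    have hmmB : m ≤ mB := by
      have hub : (m:ℝ) ≤ (B - c)/s + 1 := by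
        refine hm1.trans ?_
        have hdd : (L - c)/s ≤ (B - c)/s := by gcongr
        linarith
      have : (m:ℝ) ≤ (mB:ℝ) := hub.trans (Nat.le_ceil _)
      exact_mod_cast this
    refine ⟨m*e, J + m*d, ?_, ?_, ?_⟩
    · have h1 : m*e ≤ mB*e := Nat.mul_le_mul_right e hmmB
      have h2 : m*d ≤ mB*d := Nat.mul_le_mul_right d hmmB
      omega
    · have hval : ((m*e : ℕ):ℝ) * Real.log 2 - ((J + m*d : ℕ):ℝ) * Real.log 3
          = c + (m:ℝ)*s := by
        push_cast
        simp only [hc, hs, hη]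
        ring
      rw [hval]; linarith
    · have hval : ((m*e : ℕ):ℝ) * Real.log 2 - ((J + m*d : ℕ):ℝ) * Real.log 3
          = c + (m:ℝ)*s := by
        push_cast
        simp only [hc, hs, hη]
        ring
      rw [hval]; linarith

lemma mem_relPow_succ {X : Type*} {F : Set (X × X)} {n : ℕ} {x y z : X}
    (h1 : (x, y) ∈ relPow F n) (h2 : (y, z) ∈ F) : (x, z) ∈ relPow F (n+1) :=
  ⟨y, h1, h2⟩

lemma relPow_trans {X : Type*} {F : Set (X × X)} {m : ℕ} :
    ∀ {n : ℕ} {x y z : X}, (x, y) ∈ relPow F m → (y, z) ∈ relPow F n →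
      (x, z) ∈ relPow F (m + n) := by
  intro n
  induction n with
  | zero =>
    intro x y z h1 h2
    have : y = z := h2
    rw [← this]
    exact h1
  | succ n ih =>
    intro x y z h1 h2
    obtain ⟨w, hw1, hw2⟩ := h2
    exact ⟨w, ih h1 hw1, hw2⟩

lemma half_pow (x : ℝ) (hx0 : 0 ≤ x) (hx1 : x ≤ 1) :
    ∀ k : ℕ, (x, x / 2^k) ∈ relPow F231 k := by
  intro k
  induction k with
  | zero =>
    show x = x / 2^0
    norm_num
  | succ k ih =>
    refine mem_relPow_succ ih (Or.inr (Or.inl ⟨⟨by positivity, ?_⟩, ?_⟩))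
    · have h2 : (1:ℝ) ≤ 2^k := one_le_pow₀ (by norm_num)
      calc x / 2^k ≤ x / 1 := by gcongr
      _ = x := div_one x
      _ ≤ 1 := hx1
    · show x / 2^(k+1) = (x / 2^k) / 2
      rw [pow_succ]
      ring

lemma triple_pow (x : ℝ) (hx0 : 0 ≤ x) :
    ∀ j : ℕ, 3^j * x ≤ 1 → (x, 3^j * x) ∈ relPow F231 j := by
  intro j
  induction j with
  | zero =>
    intro _
    show x = 3^0 * x
    norm_num
  | succ j ih =>
    intro hle
    have hmono : (3:ℝ)^j * x ≤ 3^(j+1) * x := by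
      have : (3:ℝ)^j ≤ 3^(j+1) := pow_le_pow_right₀ (by norm_num) (Nat.le_succ j)
      exact mul_le_mul_of_nonneg_right this hx0
    refine mem_relPow_succ (ih (hmono.trans hle)) (Or.inl ⟨⟨by positivity, ?_⟩, ?_⟩)
    · have : (3:ℝ) * (3^j * x) ≤ 1 := by rw [pow_succ] at hle; linarith
      linarith
    · show (3:ℝ)^(j+1) * x = 3 * (3^j * x)
      rw [pow_succ]
      ring

lemma relPow_pad {x y : ℝ} {m : ℕ} (h : (x, y) ∈ relPow F231 m)
    (hy0 : 0 ≤ y) (hy1 : y ≤ 1) : ∀ n : ℕ, m ≤ n → (x, y) ∈ relPow F231 n := by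
  have aux : ∀ p : ℕ, (x, y) ∈ relPow F231 (m + p) := by
    intro p
    induction p with
    | zero => exact h
    | succ p ih => exact ⟨y, ih, Or.inr (Or.inr ⟨⟨hy0, hy1⟩, rfl⟩)⟩
  intro n hmn
  obtain ⟨p, rfl⟩ := Nat.exists_eq_add_of_le hmn
  exact aux p

/-- For all `δ, γ ∈ (0,1)` there is `N ∈ ℕ` such that for every
interval `[a,b] ⊆ (0,1]` with `b − a > δ` and every `n ≥ N`,
`[γ,1] ⊆ F_{1/2,3,1}^n([a,b])`. -/
theorem stmt5 :
    ∀ δ γ : ℝ, δ ∈ Set.Ioo (0 : ℝ) 1 → γ ∈ Set.Ioo (0 : ℝ) 1 →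
      ∃ N : ℕ, ∀ a b : ℝ, 0 < a → a ≤ b → b ≤ 1 → δ < b - a →
        ∀ n : ℕ, N ≤ n →
          Set.Icc γ 1 ⊆ relImage (relPow F231 n) (Set.Icc a b) := by
  intro δ γ hδ hγ
  obtain ⟨hδ0, hδ1⟩ := hδ
  obtain ⟨hγ0, hγ1⟩ := hγ
  have l2pos : 0 < Real.log 2 := Real.log_pos (by norm_num)
  have l3pos : 0 < Real.log 3 := Real.log_pos (by norm_num)
  set ε := Real.log (1 + δ) with hεdef
  have hεpos : 0 < ε := Real.log_pos (by linarith)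
  obtain ⟨N0, hN0⟩ := window_lemma ε (Real.log (δ/2)) (-Real.log γ) hεpos
  refine ⟨N0, ?_⟩
  intro a b ha hab hb1 hba n hn y hy
  obtain ⟨hyγ, hy1⟩ := hy
  have hy0 : 0 < y := lt_of_lt_of_le hγ0 hyγ
  have hbδ : δ < b := by linarith
  have hb0 : 0 < b := hδ0.trans hbδ
  -- choose a good left endpoint a'
  obtain ⟨a', haa', hgrow, ha'δ, ha'0, ha'1⟩ :
      ∃ a' : ℝ, a ≤ a' ∧ (1 + δ) * a' ≤ b ∧ δ/2 ≤ a' ∧ 0 < a' ∧ a' ≤ 1 := by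
    rcases le_or_gt a (b/2) with hcase | hcase
    · refine ⟨b/2, hcase, ?_, by linarith, by linarith, by linarith⟩
      nlinarith
    · refine ⟨a, le_refl a, ?_, by linarith, ha, by linarith⟩
      have : δ * a ≤ δ := by nlinarith
      nlinarith
  set L := Real.log a' - Real.log y with hL
  have hlogy0 : Real.log y ≤ 0 := Real.log_nonpos hy0.le hy1
  have hloga'0 : Real.log a' ≤ 0 := Real.log_nonpos ha'0.le ha'1
  have hLA : Real.log (δ/2) ≤ L := by
    have : Real.log (δ/2) ≤ Real.log a' := Real.log_le_log (by positivity) ha'δ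
    simp only [hL]; linarith
  have hLB : L ≤ -Real.log γ := by
    have : Real.log γ ≤ Real.log y := Real.log_le_log hγ0 hyγ
    simp only [hL]; linarith
  obtain ⟨k, j, hkj, h1, h2⟩ := hN0 L hLA hLB
  set x := y * 2^k / 3^j with hxdef
  have hxpos : 0 < x := by positivity
  have hlogx : Real.log x = Real.log y + (k:ℝ) * Real.log 2 - (j:ℝ) * Real.log 3 := by
    rw [hxdef, Real.log_div (by positivity) (by positivity),
      Real.log_mul (by positivity) (by positivity), Real.log_pow, Real.log_pow]
  have hxa : a' ≤ x := by
    have hlog : Real.log a' ≤ Real.log x := by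
      rw [hlogx]
      simp only [hL] at h1
      linarith
    exact (Real.log_le_log_iff ha'0 hxpos).mp hlog
  have hlogb : Real.log a' + ε ≤ Real.log b := by
    have hle : Real.log ((1 + δ) * a') ≤ Real.log b := Real.log_le_log (by positivity) hgrow
    rw [Real.log_mul (by positivity) (by positivity)] at hle
    simp only [hεdef]
    linarith
  have hxb : x ≤ b := by
    have hlog : Real.log x ≤ Real.log b := by
      rw [hlogx]
      simp only [hL] at h2
      linarith
    exact (Real.log_le_log_iff hxpos hb0).mp hlog
  have hx1 : x ≤ 1 := hxb.trans hb1
  -- the path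
  have key : (3:ℝ)^j * (x / 2^k) = y := by
    rw [hxdef]
    field_simp
  have path1 : (x, x / 2^k) ∈ relPow F231 k := half_pow x hxpos.le hx1 k
  have path2 : (x / 2^k, y) ∈ relPow F231 j := by
    have := triple_pow (x / 2^k) (by positivity) j (by rw [key]; exact hy1)
    rwa [key] at this
  have path : (x, y) ∈ relPow F231 (k + j) := relPow_trans path1 path2
  have pathn : (x, y) ∈ relPow F231 n := relPow_pad path hy0.le hy1 n (hkj.trans hn)
  exact ⟨x, ⟨haa'.trans hxa, hxb⟩, pathn⟩
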